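/- If Z₁ and Z₂ are independent random variables each distributed as Gum(b) with b > 0, then the difference Z₁ − Z₂ has the logistic distribution with scale b, i.e., Pr[Z₁ − Z₂ ≤ x] = 1/(1 + e^{−x/b}) for all x ∈ ℝ. -/

import Mathlib

open MeasureTheory

/-- Density of the Gumbel distribution `Gum(b)`. -/
noncomputable def gumPdf (b z : ℝ) : ℝ := (1 / b) * Real.exp (-(z / b + Real.exp (-(z / b))))

/-- The Gumbel distribution `Gum(b)` as a measure on `ℝ`. -/
noncomputable def gumMeasure (b : ℝ) : Measure ℝ :=
  volume.withDensity fun z => ENNReal.ofReal (gumPdf b z)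

/-!
The distribution function of `Gum(b)` is `F(t) = exp(-e^{-t/b})`. Conditioning on `Z₂ = z`,
`Pr[Z₁ - Z₂ ≤ x] = ∫ F(x + z) p(z) dz`, and since `F(x + z) = exp(-c e^{-z/b})` with
`c = e^{-x/b}`, the integrand is `(1 + c)⁻¹` times the derivative of `exp(-(1 + c) e^{-z/b})`,
a function increasing from `0` to `1`. Hence the probability is `1 / (1 + e^{-x/b})`.
-/

open Set Filter Topology Real

theorem integrable_deriv_of_nonneg {g g' : ℝ → ℝ} {m n : ℝ}
    (hderiv : ∀ x, HasDerivAt g (g' x) x) (hnonneg : ∀ x, 0 ≤ g' x)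
    (hbot : Tendsto g atBot (𝓝 m)) (htop : Tendsto g atTop (𝓝 n)) : Integrable g' := by
  have hcont : Continuous g := continuous_iff_continuousAt.2 fun x => (hderiv x).continuousAt
  have hFTC : ∀ i : ℝ, ∫ x in -i..i, ‖g' x‖ = g i - g (-i) := fun i => by
    simp_rw [Real.norm_of_nonneg (hnonneg _)]
    exact intervalIntegral.integral_eq_sub_of_hasDerivAt (fun x _ => hderiv x)
      (intervalIntegral.intervalIntegrable_deriv_of_nonneg hcont.continuousOn
        (fun x _ => hderiv x) (fun x _ => hnonneg x))
  refine integrable_of_intervalIntegral_norm_tendsto (n - m) (l := atTop) (a := Neg.neg) (b := id)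
    (fun i => intervalIntegral.integrableOn_deriv_of_nonneg hcont.continuousOn
      (fun x _ => hderiv x) (fun x _ => hnonneg x))
    tendsto_neg_atTop_atBot tendsto_id ?_
  simp_rw [id, hFTC]
  exact htop.sub (hbot.comp tendsto_neg_atTop_atBot)

/-- `gumCdf b 1` is the distribution function of `Gum(b)`; for `k > 0`, `gumCdf b k` is that of
`Gum(b)` shifted by `b log k`. Writing the shift multiplicatively turns products of these
functions and translates of their argument into operations on `k`. -/
noncomputable def gumCdf (b k t : ℝ) : ℝ := exp (-(k * exp (-(t / b))))

section gumCdf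

variable {b k : ℝ}

theorem gumCdf_mul (b k l t : ℝ) : gumCdf b k t * gumCdf b l t = gumCdf b (k + l) t := by
  rw [gumCdf, gumCdf, gumCdf, ← exp_add]
  ring_nf

theorem gumCdf_add (b k x t : ℝ) : gumCdf b k (x + t) = gumCdf b (k * exp (-(x / b))) t := by
  rw [gumCdf, gumCdf, mul_assoc, ← exp_add, add_div, neg_add]

theorem hasDerivAt_gumCdf (b k t : ℝ) :
    HasDerivAt (gumCdf b k) (k / b * exp (-(t / b)) * gumCdf b k t) t := by
  have hinner : HasDerivAt (fun t => -(k * exp (-(t / b)))) (k / b * exp (-(t / b))) t :=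
    (((hasDerivAt_id' t).div_const b).fun_neg.exp.const_mul k).fun_neg.congr_deriv (by ring)
  unfold gumCdf
  exact hinner.exp.congr_deriv (by ring)

theorem tendsto_gumCdf_atTop (hb : 0 < b) (k : ℝ) : Tendsto (gumCdf b k) atTop (𝓝 1) := by
  have hexp : Tendsto (fun t => exp (-(t / b))) atTop (𝓝 0) :=
    tendsto_exp_atBot.comp (tendsto_neg_atTop_atBot.comp (tendsto_id.atTop_div_const hb))
  unfold gumCdf
  simpa using ((hexp.const_mul k).neg).rexp

theorem tendsto_gumCdf_atBot (hb : 0 < b) (hk : 0 < k) : Tendsto (gumCdf b k) atBot (𝓝 0) := by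
  have hexp : Tendsto (fun t => exp (-(t / b))) atBot atTop :=
    tendsto_exp_atTop.comp (tendsto_neg_atBot_atTop.comp (tendsto_id.atBot_div_const hb))
  exact tendsto_exp_atBot.comp (tendsto_neg_atTop_atBot.comp (hexp.const_mul_atTop hk))

theorem integrable_deriv_gumCdf (hb : 0 < b) (hk : 0 < k) :
    Integrable fun t => k / b * exp (-(t / b)) * gumCdf b k t :=
  integrable_deriv_of_nonneg (hasDerivAt_gumCdf b k)
    (fun t => by unfold gumCdf; positivity) (tendsto_gumCdf_atBot hb hk) (tendsto_gumCdf_atTop hb k)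

theorem integral_deriv_gumCdf (hb : 0 < b) (hk : 0 < k) :
    ∫ t, k / b * exp (-(t / b)) * gumCdf b k t = 1 := by
  simpa using integral_of_hasDerivAt_of_tendsto (hasDerivAt_gumCdf b k)
    (integrable_deriv_gumCdf hb hk) (tendsto_gumCdf_atBot hb hk) (tendsto_gumCdf_atTop hb k)

theorem setIntegral_Iic_deriv_gumCdf (hb : 0 < b) (hk : 0 < k) (x : ℝ) :
    ∫ t in Iic x, k / b * exp (-(t / b)) * gumCdf b k t = gumCdf b k x := by
  simpa using integral_Iic_of_hasDerivAt_of_tendsto' (fun t _ => hasDerivAt_gumCdf b k t)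
    (integrable_deriv_gumCdf hb hk).integrableOn (tendsto_gumCdf_atBot hb hk)

end gumCdf

section gumMeasure

variable {b : ℝ}

instance (b : ℝ) : SFinite (gumMeasure b) := by
  unfold gumMeasure; infer_instance

theorem gumPdf_eq (b z : ℝ) : gumPdf b z = 1 / b * exp (-(z / b)) * gumCdf b 1 z := by
  rw [gumPdf, gumCdf, neg_add, exp_add, one_mul, mul_assoc]

theorem gumPdf_nonneg (hb : 0 < b) (z : ℝ) : 0 ≤ gumPdf b z := by
  unfold gumPdf; positivity

theorem integrable_gumPdf (hb : 0 < b) : Integrable (gumPdf b) := by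
  simpa only [← gumPdf_eq] using integrable_deriv_gumCdf hb one_pos

theorem gumMeasure_Iic (hb : 0 < b) (x : ℝ) :
    gumMeasure b (Iic x) = ENNReal.ofReal (gumCdf b 1 x) := by
  rw [gumMeasure, withDensity_apply _ measurableSet_Iic, ← ofReal_integral_eq_lintegral_ofReal
    (integrable_gumPdf hb).integrableOn (ae_of_all _ (gumPdf_nonneg hb))]
  simp only [gumPdf_eq, setIntegral_Iic_deriv_gumCdf hb one_pos]

theorem lintegral_gumMeasure_ofReal (hb : 0 < b) {f : ℝ → ℝ} (hf : Measurable f)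
    (hf_nonneg : ∀ z, 0 ≤ f z) (hint : Integrable fun z => gumPdf b z * f z) :
    ∫⁻ z, ENNReal.ofReal (f z) ∂gumMeasure b = ENNReal.ofReal (∫ z, gumPdf b z * f z) := by
  have hpdf : Measurable fun z => ENNReal.ofReal (gumPdf b z) := by
    unfold gumPdf; fun_prop
  rw [gumMeasure, lintegral_withDensity_eq_lintegral_mul _ hpdf hf.ennreal_ofReal,
    ofReal_integral_eq_lintegral_ofReal hint
      (ae_of_all _ fun z => mul_nonneg (gumPdf_nonneg hb z) (hf_nonneg z))]
  simp only [Pi.mul_apply, ENNReal.ofReal_mul (gumPdf_nonneg hb _)]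

end gumMeasure

/-- If `Z₁, Z₂` are independent `Gum(b)` random variables with `b > 0`, then
`Z₁ − Z₂` has the logistic distribution with scale `b`:
`Pr[Z₁ − Z₂ ≤ x] = 1/(1 + e^{−x/b})` for all `x ∈ ℝ`. -/
theorem gumbel_difference_is_logistic (b : ℝ) (hb : 0 < b) (x : ℝ) :
    ((gumMeasure b).prod (gumMeasure b)) {p : ℝ × ℝ | p.1 - p.2 ≤ x}
      = ENNReal.ofReal (1 / (1 + Real.exp (-x / b))) := by
  have hc : 0 < 1 + exp (-(x / b)) := by positivity
  have hslice : ∀ z, (fun y => (y, z)) ⁻¹' {p : ℝ × ℝ | p.1 - p.2 ≤ x} = Iic (x + z) := by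
    intro z; ext y; simp
  have hintegrand : ∀ z, gumPdf b z * gumCdf b 1 (x + z)
      = (1 + exp (-(x / b)))⁻¹ *
        ((1 + exp (-(x / b))) / b * exp (-(z / b)) * gumCdf b (1 + exp (-(x / b))) z) := by
    intro z
    rw [gumPdf_eq, gumCdf_add, one_mul, mul_assoc, gumCdf_mul]
    field_simp
  rw [Measure.prod_apply_symm (measurableSet_le (by fun_prop) (by fun_prop))]
  simp only [hslice, gumMeasure_Iic hb]
  rw [lintegral_gumMeasure_ofReal hb (f := fun z => gumCdf b 1 (x + z))
    (by unfold gumCdf; fun_prop) (fun _ => exp_nonneg _)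
    (by simpa only [hintegrand] using (integrable_deriv_gumCdf hb hc).const_mul _)]
  simp only [hintegrand, integral_const_mul, integral_deriv_gumCdf hb hc, mul_one, one_div, neg_div]
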